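/- Let p : ℝ^d → [1, ∞) be measurable with p⁺ := ess sup_{x∈ℝ^d} p(x) < ∞. If u ∈ L^{p(·)}(ℝ^d), then for 𝓛^d-a.e. x ∈ ℝ^d, lim_{ε→0} ε^{−d} ∫_{B_ε(x)} |u(y) − u(x)|^{p(y)} dy = 0. -/

import Mathlib

open MeasureTheory Filter Topology Metric Set
open scoped ENNReal NNReal RealInnerProductSpace

noncomputable section

/-- Euclidean space ℝ^d. -/
abbrev Euc (d : ℕ) : Type := EuclideanSpace ℝ (Fin d)

/-- The modular `ϱ_{p(·)}(u) = ∫_Ω ‖u‖^{p(x)} dx` of a variable exponent. -/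
def eucModular {d : ℕ} {V : Type} [NormedAddCommGroup V]
    (Ω : Set (Euc d)) (p : Euc d → ℝ) (u : Euc d → V) : ℝ :=
  ∫ x in Ω, ‖u x‖ ^ p x

/-- The Luxemburg norm of `u` in `L^{p(·)}(Ω)`. -/
def luxNorm {d : ℕ} {V : Type} [NormedAddCommGroup V]
    (Ω : Set (Euc d)) (p : Euc d → ℝ) (u : Euc d → V) : ℝ :=
  sInf {l : ℝ | 0 < l ∧ (∫ x in Ω, (‖u x‖ / l) ^ p x) ≤ 1}

/-- Membership in the variable exponent Lebesgue space `L^{p(·)}(Ω)`. -/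
def MemVarLp {d : ℕ} {V : Type} [NormedAddCommGroup V]
    (Ω : Set (Euc d)) (p : Euc d → ℝ) (u : Euc d → V) : Prop :=
  AEStronglyMeasurable u (volume.restrict Ω) ∧
    ∃ l : ℝ, 0 < l ∧ IntegrableOn (fun x => (‖u x‖ / l) ^ p x) Ω

/-- log-Hölder continuity of a variable exponent on `Ω`. -/
def LogHolder {d : ℕ} (Ω : Set (Euc d)) (p : Euc d → ℝ) : Prop :=
  ∃ C : ℝ, 0 < C ∧ ∀ x ∈ Ω, ∀ y ∈ Ω, dist x y ≤ 1 / 2 →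
    |p x - p y| ≤ C / (-Real.log (dist x y))

/-- The elementary jump function `u_{x₀,a,b,ν}`. -/
def jumpFun {d m : ℕ} (x₀ : Euc d) (a b : Euc m) (ν : Euc d) : Euc d → Euc m :=
  fun x => if 0 < ⟪x - x₀, ν⟫ then a else b

/-- `x` is an approximate jump point of `u` with one-sided limits `a, b` and normal `ν`. -/
def ApproxJumpPt {d m : ℕ} (u : Euc d → Euc m) (x : Euc d) (a b : Euc m) (ν : Euc d) : Prop :=
  a ≠ b ∧ ‖ν‖ = 1 ∧ ∀ ϱ : ℝ, 0 < ϱ →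
    Tendsto (fun ε : ℝ =>
        (volume {y ∈ ball x ε | ϱ ≤ ‖u y - jumpFun x a b ν y‖}).toReal / ε ^ d)
      (𝓝[>] 0) (𝓝 0)

/-- The (approximate) jump set `J_u`. -/
def approxJumpSet {d m : ℕ} (u : Euc d → Euc m) : Set (Euc d) :=
  {x | ∃ a b ν, ApproxJumpPt u x a b ν}

open Classical in
/-- The one-sided trace `u⁺` on the jump set (junk value `0` elsewhere). -/
def jumpA {d m : ℕ} (u : Euc d → Euc m) (x : Euc d) : Euc m :=
  if h : x ∈ approxJumpSet u then h.choose else 0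

open Classical in
/-- The one-sided trace `u⁻` on the jump set (junk value `0` elsewhere). -/
def jumpB {d m : ℕ} (u : Euc d → Euc m) (x : Euc d) : Euc m :=
  if h : x ∈ approxJumpSet u then h.choose_spec.choose else 0

open Classical in
/-- The approximate normal `ν_u` on the jump set (junk value `0` elsewhere). -/
def jumpNu {d m : ℕ} (u : Euc d → Euc m) (x : Euc d) : Euc d :=
  if h : x ∈ approxJumpSet u then h.choose_spec.choose_spec.choose else 0

/-- `G` is the approximate gradient of `u` at `x`. -/
def ApproxGradAt {d m : ℕ} (u : Euc d → Euc m) (x : Euc d) (G : Euc d →L[ℝ] Euc m) : Prop :=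
  ∀ ϱ : ℝ, 0 < ϱ →
    Tendsto (fun ε : ℝ =>
        (volume {y ∈ ball x ε | ϱ * ‖y - x‖ ≤ ‖u y - u x - G (y - x)‖}).toReal / ε ^ d)
      (𝓝[>] 0) (𝓝 0)

open Classical in
/-- The approximate gradient `∇u` (junk value `0` where it does not exist). -/
def aGrad {d m : ℕ} (u : Euc d → Euc m) (x : Euc d) : Euc d →L[ℝ] Euc m :=
  if h : ∃ G, ApproxGradAt u x G then h.choose else 0

/-- Membership in `GSBV^{p(·)}(A;ℝ^m)`: measurable, approximately differentiable a.e.,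
gradient with finite `p(·)`-modular and jump set with finite `ℋ^{d-1}` measure. -/
def MemGSBVp {d m : ℕ} (A : Set (Euc d)) (p : Euc d → ℝ) (u : Euc d → Euc m) : Prop :=
  AEStronglyMeasurable u (volume.restrict A) ∧
  (∀ᵐ x ∂volume.restrict A, ∃ G, ApproxGradAt u x G) ∧
  IntegrableOn (fun x => ‖aGrad u x‖ ^ p x) A ∧
  μH[(d : ℝ) - 1] (approxJumpSet u ∩ A) < ⊤

/-- Membership in `SBV^{p(·)}(A;ℝ^m)`. -/
def MemSBVp {d m : ℕ} (A : Set (Euc d)) (p : Euc d → ℝ) (u : Euc d → Euc m) : Prop :=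
  MemGSBVp A p u ∧ IntegrableOn u A ∧
    (∫⁻ x in approxJumpSet u ∩ A, ‖jumpA u x - jumpB u x‖₊ ∂μH[(d : ℝ) - 1]) < ⊤

/-- Piecewise constant SBV functions: vanishing approximate gradient, finite jump measure. -/
def MemSBVpc {d m : ℕ} (A : Set (Euc d)) (u : Euc d → Euc m) : Prop :=
  AEStronglyMeasurable u (volume.restrict A) ∧
  (∀ᵐ x ∂volume.restrict A, ApproxGradAt u x 0) ∧
  μH[(d : ℝ) - 1] (approxJumpSet u ∩ A) < ⊤

/-- Membership in the variable exponent Sobolev space `W^{1,p(·)}`. -/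
def MemW1p {d m : ℕ} (A : Set (Euc d)) (p : Euc d → ℝ) (u : Euc d → Euc m) : Prop :=
  MemGSBVp A p u ∧ μH[(d : ℝ) - 1] (approxJumpSet u ∩ A) = 0 ∧ MemVarLp A p u

/-- The quantile `u_*(s;B)` of a scalar function. -/
def quantile1 {d : ℕ} (v : Euc d → ℝ) (B : Set (Euc d)) (s : ℝ) : ℝ :=
  sInf {t : ℝ | ENNReal.ofReal s ≤ volume {x ∈ B | v x < t}}

/-- The componentwise quantile `u_*(s;B)`. -/
def quantile {d m : ℕ} (u : Euc d → Euc m) (B : Set (Euc d)) (s : ℝ) : Euc m :=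
  WithLp.toLp 2 (fun i => quantile1 (fun x => u x i) B s)

/-- The (componentwise) median `med(u;B)`. -/
def medOn {d m : ℕ} (u : Euc d → Euc m) (B : Set (Euc d)) : Euc m :=
  quantile u B ((volume B).toReal / 2)

/-- The quantity `(2 γ_iso ℋ^{d−1}(J_u ∩ B))^{d/(d−1)}`. -/
def jumpQ {d m : ℕ} (γ : ℝ) (u : Euc d → Euc m) (B : Set (Euc d)) : ℝ :=
  (2 * γ * (μH[(d : ℝ) - 1] (approxJumpSet u ∩ B)).toReal) ^ ((d : ℝ) / ((d : ℝ) - 1))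

/-- The lower truncation level `τ'(u;B)`. -/
def tauLow {d m : ℕ} (γ : ℝ) (u : Euc d → Euc m) (B : Set (Euc d)) : Euc m :=
  quantile u B (jumpQ γ u B)

/-- The upper truncation level `τ''(u;B)`. -/
def tauHigh {d m : ℕ} (γ : ℝ) (u : Euc d → Euc m) (B : Set (Euc d)) : Euc m :=
  quantile u B ((volume B).toReal - jumpQ γ u B)

/-- The truncation operator `T_B u = (u ∧ τ''(u;B)) ∨ τ'(u;B)`. -/
def truncOn {d m : ℕ} (γ : ℝ) (u : Euc d → Euc m) (B : Set (Euc d)) : Euc d → Euc m :=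
  fun x => WithLp.toLp 2 (fun i => max (min (u x i) (tauHigh γ u B i)) (tauLow γ u B i))

/-- Minimization with own boundary data:
`m_F(u,A) = inf {F(v,A) : v admissible, v = u in a neighborhood of ∂A}`. -/
def mF {d m : ℕ} (F : (Euc d → Euc m) → Set (Euc d) → ℝ≥0∞)
    (S : (Euc d → Euc m) → Prop) (u : Euc d → Euc m) (A : Set (Euc d)) : ℝ≥0∞ :=
  ⨅ (v : Euc d → Euc m) (_ : S v)
    (_ : ∃ U : Set (Euc d), IsOpen U ∧ frontier A ⊆ U ∧ EqOn v u U), F v A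

/-- Volume of the unit ball `γ_k` in ℝ^k. -/
def unitBallVol (k : ℕ) : ℝ := (volume (ball (0 : Euc k) 1)).toReal

/-- The affine function `ℓ_{x₀,u₀,ξ}`. -/
def affineFun {d m : ℕ} (x₀ : Euc d) (u₀ : Euc m) (ξ : Euc d →L[ℝ] Euc m) : Euc d → Euc m :=
  fun x => u₀ + ξ (x - x₀)

/-- The bulk density cell formula `limsup_ε m_F(ℓ_{x₀,u₀,ξ}, B_ε(x₀)) / (γ_d ε^d)`. -/
def bulkDensity {d m : ℕ} (F : (Euc d → Euc m) → Set (Euc d) → ℝ≥0∞)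
    (S : (Euc d → Euc m) → Prop) (x₀ : Euc d) (u₀ : Euc m) (ξ : Euc d →L[ℝ] Euc m) : ℝ≥0∞ :=
  Filter.limsup (fun ε : ℝ =>
      mF F S (affineFun x₀ u₀ ξ) (ball x₀ ε) / ENNReal.ofReal (unitBallVol d * ε ^ d))
    (𝓝[>] 0)

/-- The bulk density cell formula with the linear competitor `ℓ_{0,0,ξ}(x) = ξ x`. -/
def bulkDensity0 {d m : ℕ} (F : (Euc d → Euc m) → Set (Euc d) → ℝ≥0∞)
    (S : (Euc d → Euc m) → Prop) (x₀ : Euc d) (ξ : Euc d →L[ℝ] Euc m) : ℝ≥0∞ :=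
  Filter.limsup (fun ε : ℝ =>
      mF F S (fun x => ξ x) (ball x₀ ε) / ENNReal.ofReal (unitBallVol d * ε ^ d))
    (𝓝[>] 0)

/-- The surface density cell formula
`limsup_ε m_F(u_{x₀,a,b,ν}, B_ε(x₀)) / (γ_{d−1} ε^{d−1})`. -/
def surfDensity {d m : ℕ} (F : (Euc d → Euc m) → Set (Euc d) → ℝ≥0∞)
    (S : (Euc d → Euc m) → Prop) (x₀ : Euc d) (a b : Euc m) (ν : Euc d) : ℝ≥0∞ :=
  Filter.limsup (fun ε : ℝ =>
      mF F S (jumpFun x₀ a b ν) (ball x₀ ε) /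
        ENNReal.ofReal (unitBallVol (d - 1) * ε ^ (d - 1)))
    (𝓝[>] 0)

/-- `∫_B |∇u|^{p(x)} dx` as an extended-real quantity. -/
def eBulk {d m : ℕ} (p : Euc d → ℝ) (u : Euc d → Euc m) (A : Set (Euc d)) : ℝ≥0∞ :=
  ∫⁻ x in A, ENNReal.ofReal (‖aGrad u x‖ ^ p x)

/-- `ℋ^{d−1}(J_u ∩ A)`. -/
def eSurf {d m : ℕ} (u : Euc d → Euc m) (A : Set (Euc d)) : ℝ≥0∞ :=
  μH[(d : ℝ) - 1] (approxJumpSet u ∩ A)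

/-- The bulk part `∫_A f(x, ∇u) dx` of a free-discontinuity energy. -/
def energyBulkInt {d m : ℕ} (f : Euc d → (Euc d →L[ℝ] Euc m) → ℝ)
    (u : Euc d → Euc m) (A : Set (Euc d)) : ℝ≥0∞ :=
  ∫⁻ x in A, ENNReal.ofReal (f x (aGrad u x))

/-- The surface part `∫_{J_u ∩ A} g(x, [u], ν_u) dℋ^{d−1}` of a free-discontinuity energy. -/
def energySurfInt {d m : ℕ} (g : Euc d → Euc m → Euc d → ℝ)
    (u : Euc d → Euc m) (A : Set (Euc d)) : ℝ≥0∞ :=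
  ∫⁻ x in approxJumpSet u ∩ A,
    ENNReal.ofReal (g x (jumpA u x - jumpB u x) (jumpNu u x)) ∂μH[(d : ℝ) - 1]

/-- The measure `μ = 𝓛^d⌊Ω + ℋ^{d−1}⌊(J_u ∩ Ω)`. -/
def muGSBV {d m : ℕ} (Ω : Set (Euc d)) (u : Euc d → Euc m) : Measure (Euc d) :=
  volume.restrict Ω + (μH[(d : ℝ) - 1]).restrict (approxJumpSet u ∩ Ω)

/-- `m^δ_F(u,A)`: infimum of `Σᵢ m_F(u,Bᵢ)` over countable families of pairwise disjoint
balls of diameter at most `δ` contained in `A` covering `μ`-almost all of `A`. -/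
def mDelta {d m : ℕ} (F : (Euc d → Euc m) → Set (Euc d) → ℝ≥0∞)
    (S : (Euc d → Euc m) → Prop) (u : Euc d → Euc m) (A : Set (Euc d))
    (μ : Measure (Euc d)) (δ : ℝ) : ℝ≥0∞ :=
  ⨅ (I : Set (Euc d × ℝ)) (_ : I.Countable)
    (_ : ∀ b ∈ I, ball b.1 b.2 ⊆ A ∧ 2 * b.2 ≤ δ)
    (_ : I.PairwiseDisjoint fun b => ball b.1 b.2)
    (_ : μ (A \ ⋃ b ∈ I, ball b.1 b.2) = 0),
    ∑' b : I, mF F S u (ball (b : Euc d × ℝ).1 (b : Euc d × ℝ).2)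

/-- Convergence in measure on every bounded ball (the topology of `L⁰(ℝ^d;ℝ^m)`). -/
def TendstoLocInMeasure {d m : ℕ} (uj : ℕ → Euc d → Euc m) (u : Euc d → Euc m) : Prop :=
  ∀ R : ℝ, 0 < R → TendstoInMeasure (volume.restrict (ball (0 : Euc d) R)) uj atTop u

/-- `F` is the Γ-limit of `Fj` with respect to convergence in measure `μ`. -/
def IsGammaLimit {d m : ℕ} (μ : Measure (Euc d))
    (Fj : ℕ → (Euc d → Euc m) → ℝ≥0∞) (F : (Euc d → Euc m) → ℝ≥0∞) : Prop :=
  (∀ (u : Euc d → Euc m) (uj : ℕ → Euc d → Euc m),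
      TendstoInMeasure μ uj atTop u → F u ≤ atTop.liminf fun j => Fj j (uj j)) ∧
  (∀ u : Euc d → Euc m, ∃ uj : ℕ → Euc d → Euc m,
      TendstoInMeasure μ uj atTop u ∧ atTop.limsup (fun j => Fj j (uj j)) ≤ F u)

/-- `F` is the Γ-limit of `Fj` with respect to local convergence in measure on `ℝ^d`. -/
def IsGammaLimitL0 {d m : ℕ}
    (Fj : ℕ → (Euc d → Euc m) → ℝ≥0∞) (F : (Euc d → Euc m) → ℝ≥0∞) : Prop :=
  (∀ (u : Euc d → Euc m) (uj : ℕ → Euc d → Euc m),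
      TendstoLocInMeasure uj u → F u ≤ atTop.liminf fun j => Fj j (uj j)) ∧
  (∀ u : Euc d → Euc m, ∃ uj : ℕ → Euc d → Euc m,
      TendstoLocInMeasure uj u ∧ atTop.limsup (fun j => Fj j (uj j)) ≤ F u)

/-- `F` is the Γ-limit of `Fj` with respect to `L¹(Ω)` convergence. -/
def IsGammaLimitL1 {d m : ℕ} (Ω : Set (Euc d))
    (Fj : ℕ → (Euc d → Euc m) → ℝ≥0∞) (F : (Euc d → Euc m) → ℝ≥0∞) : Prop :=
  (∀ (u : Euc d → Euc m) (uj : ℕ → Euc d → Euc m),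
      Tendsto (fun j => ∫ x in Ω, ‖uj j x - u x‖) atTop (𝓝 0) →
      F u ≤ atTop.liminf fun j => Fj j (uj j)) ∧
  (∀ u : Euc d → Euc m, ∃ uj : ℕ → Euc d → Euc m,
      Tendsto (fun j => ∫ x in Ω, ‖uj j x - u x‖) atTop (𝓝 0) ∧
      atTop.limsup (fun j => Fj j (uj j)) ≤ F u)

/-- `Ω` has Lipschitz boundary: near every boundary point it is the subgraph of a
Lipschitz function in some unit direction. -/
def HasLipschitzBoundary {d : ℕ} (Ω : Set (Euc d)) : Prop :=
  ∀ x ∈ frontier Ω, ∃ (L : ℝ≥0) (ν : Euc d) (φ : Euc d → ℝ) (r : ℝ),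
    0 < r ∧ ‖ν‖ = 1 ∧ LipschitzWith L φ ∧
    Ω ∩ ball x r = {y ∈ ball x r | ⟪y, ν⟫ < φ (y - ⟪y, ν⟫ • ν)}

/-!
For each rational `c` the function `|u - c| ^ p` is locally integrable (`p` is bounded and the
modular of `u` is finite), so almost every `x` is a Lebesgue point of all of them at once. At such
a point pick `c ∈ ℚ` with `|u x - c| ≤ δ ≤ 1`. Since `1 ≤ p ≤ p⁺`, the quasi-triangle inequality
`(s + t) ^ q ≤ 2 ^ p⁺ (s ^ q + t ^ q)` bounds `|u y - u x| ^ p y` by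
`2 ^ p⁺ (| |u y - c| ^ p y - |u x - c| ^ p x | + 2δ)`, whose averages over small balls are
eventually below `2 ^ p⁺ · 3δ`.
-/

namespace Real

theorem rpow_le_max_one_rpow {a q P : ℝ} (ha : 0 ≤ a) (hq : 0 ≤ q) (hqP : q ≤ P) :
    a ^ q ≤ max 1 a ^ P :=
  (rpow_le_rpow ha (le_max_right 1 a) hq).trans
    (rpow_le_rpow_of_exponent_le (le_max_left 1 a) hqP)

theorem add_rpow_le_two_rpow_mul {a b q P : ℝ} (ha : 0 ≤ a) (hb : 0 ≤ b) (hq : 1 ≤ q)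
    (hqP : q ≤ P) : (a + b) ^ q ≤ 2 ^ P * (a ^ q + b ^ q) := by
  have h := NNReal.rpow_add_le_mul_rpow_add_rpow ⟨a, ha⟩ ⟨b, hb⟩ hq
  have h' : (a + b) ^ q ≤ 2 ^ (q - 1) * (a ^ q + b ^ q) := by exact_mod_cast h
  exact h'.trans (mul_le_mul_of_nonneg_right
    (rpow_le_rpow_of_exponent_le one_le_two (by linarith)) (by positivity))

theorem abs_sub_rpow_le_of_abs_sub_le {a b c δ q r P : ℝ} (hbc : |b - c| ≤ δ) (hδ : δ ≤ 1)
    (hq : 1 ≤ q) (hqP : q ≤ P) (hr : 1 ≤ r) :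
    |a - b| ^ q ≤ 2 ^ P * (|(|a - c| ^ q - |b - c| ^ r)| + 2 * δ) := by
  have small : ∀ s : ℝ, 1 ≤ s → |b - c| ^ s ≤ δ := fun s hs =>
    (rpow_le_self_of_le_one (abs_nonneg _) (hbc.trans hδ) hs).trans hbc
  have htri : |a - b| ≤ |a - c| + |b - c| := by
    simpa only [abs_sub_comm c b] using abs_sub_le a c b
  calc |a - b| ^ q ≤ (|a - c| + |b - c|) ^ q :=
        rpow_le_rpow (abs_nonneg _) htri (by linarith)
    _ ≤ 2 ^ P * (|a - c| ^ q + |b - c| ^ q) :=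
        add_rpow_le_two_rpow_mul (abs_nonneg _) (abs_nonneg _) hq hqP
    _ ≤ 2 ^ P * (|(|a - c| ^ q - |b - c| ^ r)| + 2 * δ) := by
        refine mul_le_mul_of_nonneg_left ?_ (by positivity)
        linarith [le_abs_self (|a - c| ^ q - |b - c| ^ r), small q hq, small r hr]

end Real

section Integrability

variable {X : Type*} [MeasurableSpace X] {μ : Measure X}
  {p : X → ℝ} {P : ℝ} {u : X → ℝ}

theorem integrable_abs_rpow_of_integrable_div_rpow {l : ℝ} (hl : 0 < l)
    (hp : AEMeasurable p μ) (h0 : ∀ᵐ x ∂μ, 0 ≤ p x) (hP : ∀ᵐ x ∂μ, p x ≤ P)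
    (hu : AEStronglyMeasurable u μ) (hmod : Integrable (fun x => (|u x| / l) ^ p x) μ) :
    Integrable (fun x => |u x| ^ p x) μ := by
  refine (hmod.const_mul (max 1 l ^ P)).mono'
    (hu.norm.aemeasurable.pow hp).aestronglyMeasurable ?_
  filter_upwards [h0, hP] with x hx0 hxP
  rw [Real.norm_eq_abs, abs_of_nonneg (by positivity), ← div_mul_cancel₀ |u x| hl.ne',
    Real.mul_rpow (by positivity) hl.le, mul_div_assoc, div_self hl.ne', mul_one, mul_comm]
  exact mul_le_mul_of_nonneg_right (Real.rpow_le_max_one_rpow hl.le hx0 hxP) (by positivity)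

theorem locallyIntegrable_abs_sub_rpow [TopologicalSpace X] [IsLocallyFiniteMeasure μ]
    (hp : AEMeasurable p μ) (h1 : ∀ᵐ x ∂μ, 1 ≤ p x) (hP : ∀ᵐ x ∂μ, p x ≤ P)
    (hu : AEStronglyMeasurable u μ) (hint : Integrable (fun x => |u x| ^ p x) μ) (c : ℝ) :
    LocallyIntegrable (fun x => |u x - c| ^ p x) μ := by
  refine (hint.const_mul (2 ^ P)).locallyIntegrable.add
    (locallyIntegrable_const (2 ^ P * max 1 |c| ^ P)) |>.mono
    ((hu.sub aestronglyMeasurable_const).norm.aemeasurable.pow hp).aestronglyMeasurable ?_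
  filter_upwards [h1, hP] with x hx1 hxP
  have hx0 : 0 ≤ p x := zero_le_one.trans hx1
  simp only [Pi.add_apply]
  rw [Real.norm_of_nonneg (by positivity), Real.norm_of_nonneg (by positivity)]
  calc |u x - c| ^ p x ≤ (|u x| + |c|) ^ p x :=
        Real.rpow_le_rpow (abs_nonneg _) (abs_sub _ _) hx0
    _ ≤ 2 ^ P * (|u x| ^ p x + |c| ^ p x) :=
        Real.add_rpow_le_two_rpow_mul (abs_nonneg _) (abs_nonneg _) hx1 hxP
    _ ≤ 2 ^ P * |u x| ^ p x + 2 ^ P * max 1 |c| ^ P := by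
        rw [mul_add]
        gcongr
        exact Real.rpow_le_max_one_rpow (abs_nonneg _) hx0 hxP

end Integrability

theorem setAverage_le_mul_setAverage_add {α : Type*} [MeasurableSpace α] {μ : Measure α}
    {s : Set α} {f g : α → ℝ} {a b : ℝ} (ha : 0 ≤ a) (hb : 0 ≤ b) (hs : μ s ≠ ∞)
    (hf : IntegrableOn f s μ) (hg : IntegrableOn g s μ)
    (hfg : ∀ᵐ y ∂μ.restrict s, f y ≤ a * (g y + b)) :
    ⨍ y in s, f y ∂μ ≤ a * (⨍ y in s, g y ∂μ + b) := by
  have hgb : IntegrableOn (fun y => a * (g y + b)) s μ :=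
    (hg.add (integrableOn_const hs)).const_mul a
  have hint : ∫ y in s, a * (g y + b) ∂μ = a * (∫ y in s, g y ∂μ + μ.real s * b) := by
    rw [integral_const_mul, integral_add hg (integrableOn_const hs), setIntegral_const,
      smul_eq_mul]
  have hmass : (μ.real s)⁻¹ * μ.real s ≤ 1 := inv_mul_le_one_of_le₀ le_rfl measureReal_nonneg
  calc ⨍ y in s, f y ∂μ ≤ ⨍ y in s, a * (g y + b) ∂μ := by
        simp only [setAverage_eq, smul_eq_mul]
        exact mul_le_mul_of_nonneg_left (integral_mono_ae hf hgb hfg) (by positivity)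
    _ = a * (⨍ y in s, g y ∂μ + (μ.real s)⁻¹ * μ.real s * b) := by
        simp only [setAverage_eq, smul_eq_mul, hint]
        ring
    _ ≤ a * (⨍ y in s, g y ∂μ + b) := by
        gcongr
        exact mul_le_of_le_one_left hb hmass

section LebesguePoints

variable {α : Type*} [PseudoMetricSpace α] [MeasurableSpace α] [BorelSpace α]
  [SecondCountableTopology α] {μ : Measure α} [IsUnifLocDoublingMeasure μ]
  [IsLocallyFiniteMeasure μ]

theorem ae_tendsto_average_abs_rpow_sub_rat {p : α → ℝ} {u : α → ℝ}
    (hloc : ∀ c : ℝ, LocallyIntegrable (fun y => |u y - c| ^ p y) μ) :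
    ∀ᵐ x ∂μ, ∀ c : ℚ, Tendsto (fun ε => ⨍ y in closedBall x ε,
      |(|u y - c| ^ p y - |u x - c| ^ p x)| ∂μ) (𝓝[>] 0) (𝓝 0) := by
  refine ae_all_iff.2 fun c => ?_
  filter_upwards [IsUnifLocDoublingMeasure.ae_tendsto_average_norm_sub μ (hloc c) 1]
    with x hx
  refine hx (fun _ => x) id tendsto_id ?_
  filter_upwards [self_mem_nhdsWithin] with ε hε
  simpa using (le_of_lt hε : (0 : ℝ) ≤ ε)

theorem ae_tendsto_average_abs_sub_rpow [ProperSpace α] {p : α → ℝ} {P : ℝ} {u : α → ℝ}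
    (h1 : ∀ᵐ x ∂μ, 1 ≤ p x) (hP : ∀ᵐ x ∂μ, p x ≤ P)
    (hloc : ∀ c : ℝ, LocallyIntegrable (fun y => |u y - c| ^ p y) μ) :
    ∀ᵐ x ∂μ, Tendsto (fun ε => ⨍ y in closedBall x ε, |u y - u x| ^ p y ∂μ)
      (𝓝[>] 0) (𝓝 0) := by
  filter_upwards [ae_tendsto_average_abs_rpow_sub_rat hloc, h1] with x hx hx1
  have hbound : ∀ δ, 0 < δ → δ ≤ 1 → ∀ᶠ ε in 𝓝[>] 0,
      ⨍ y in closedBall x ε, |u y - u x| ^ p y ∂μ ≤ 2 ^ P * (3 * δ) := by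
    intro δ hδ hδ1
    obtain ⟨c, hc⟩ := exists_rat_near (u x) hδ
    filter_upwards [(hx c).eventually (gt_mem_nhds hδ)] with ε hε
    have hs : μ (closedBall x ε) ≠ ∞ := measure_closedBall_lt_top.ne
    have hgc := (hloc c).integrableOn_isCompact (isCompact_closedBall x ε)
    refine (setAverage_le_mul_setAverage_add (a := 2 ^ P) (b := 2 * δ)
      (g := fun y => |(|u y - c| ^ p y - |u x - c| ^ p x)|) (by positivity) (by positivity) hs
      ((hloc (u x)).integrableOn_isCompact (isCompact_closedBall x ε))
      (hgc.sub (integrableOn_const hs)).abs ?_).trans (by gcongr; linarith)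
    filter_upwards [ae_restrict_of_ae (h1.and hP)] with y ⟨hy1, hyP⟩
    exact Real.abs_sub_rpow_le_of_abs_sub_le hc.le hδ1 hy1 hyP hx1
  refine tendsto_order.2 ⟨fun a ha => Eventually.of_forall fun ε => ha.trans_le ?_,
    fun η hη => ?_⟩
  · rw [setAverage_eq, smul_eq_mul]
    exact mul_nonneg (by positivity) (integral_nonneg fun y => by positivity)
  · set δ := min 1 (η / (4 * 2 ^ P))
    have hδη : δ ≤ η / (4 * 2 ^ P) := min_le_right _ _
    filter_upwards [hbound δ (by positivity) (min_le_left _ _)] with ε hε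
    refine hε.trans_lt ?_
    rw [le_div_iff₀ (by positivity)] at hδη
    linarith

end LebesguePoints

theorem rpow_neg_finrank_mul_setIntegral_ball_le {E : Type*} [NormedAddCommGroup E]
    [NormedSpace ℝ E] [FiniteDimensional ℝ E] [MeasurableSpace E] [BorelSpace E]
    (μ : Measure E) [μ.IsAddHaarMeasure] {f : E → ℝ} {x : E} {ε : ℝ} (hε : 0 < ε)
    (hf : IntegrableOn f (closedBall x ε) μ) (hf0 : 0 ≤ᵐ[μ.restrict (closedBall x ε)] f) :
    ε ^ (-(Module.finrank ℝ E : ℝ)) * ∫ y in ball x ε, f y ∂μ ≤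
      μ.real (closedBall 0 1) * ⨍ y in closedBall x ε, f y ∂μ := by
  have hscale : μ.real (closedBall 0 1) * (μ.real (closedBall x ε))⁻¹ =
      ε ^ (-(Module.finrank ℝ E : ℝ)) := by
    have hunit : 0 < μ.real (closedBall (0 : E) 1) :=
      ENNReal.toReal_pos (measure_closedBall_pos μ 0 one_pos).ne' measure_closedBall_lt_top.ne
    rw [Measure.addHaar_real_closedBall' μ x hε.le, Real.rpow_neg hε.le, Real.rpow_natCast]
    field_simp
  rw [setAverage_eq, smul_eq_mul, ← mul_assoc, hscale]
  exact mul_le_mul_of_nonneg_left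
    (setIntegral_mono_set hf hf0 ball_subset_closedBall.eventuallyLE) (by positivity)

/-- Lebesgue points in variable exponent spaces: if
`p⁺ = ess sup p < ∞` and `u ∈ L^{p(·)}(ℝ^d)`, then for a.e. `x`,
`ε^{−d} ∫_{B_ε(x)} |u(y) − u(x)|^{p(y)} dy → 0` as `ε → 0`. -/
theorem varLp_lebesgue_points {d : ℕ} (p : Euc d → ℝ) (hp : Measurable p)
    (h1 : ∀ᵐ x : Euc d, 1 ≤ p x) (pl : ℝ) (hpl : ∀ᵐ x : Euc d, p x ≤ pl)
    (u : Euc d → ℝ) (hu : MemVarLp Set.univ p u) :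
    ∀ᵐ x : Euc d, Tendsto (fun ε : ℝ =>
        ε ^ (-(d : ℝ)) * ∫ y in ball x ε, |u y - u x| ^ p y) (𝓝[>] 0) (𝓝 0) := by
  obtain ⟨hu_meas, l, hl, hmod⟩ := hu
  rw [Measure.restrict_univ] at hu_meas
  simp only [integrableOn_univ, Real.norm_eq_abs] at hmod
  have hloc := locallyIntegrable_abs_sub_rpow hp.aemeasurable h1 hpl hu_meas
    (integrable_abs_rpow_of_integrable_div_rpow hl hp.aemeasurable
      (h1.mono fun x hx => zero_le_one.trans hx) hpl hu_meas hmod)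
  filter_upwards [ae_tendsto_average_abs_sub_rpow h1 hpl hloc] with x hx
  have hlim := hx.const_mul (volume.real (closedBall (0 : Euc d) 1))
  rw [mul_zero] at hlim
  refine squeeze_zero' ?_ ?_ hlim
  · filter_upwards [self_mem_nhdsWithin] with ε hε
    exact mul_nonneg (Real.rpow_nonneg (le_of_lt hε) _)
      (integral_nonneg fun y => by positivity)
  · filter_upwards [self_mem_nhdsWithin] with ε hε
    simpa only [finrank_euclideanSpace_fin] using
      rpow_neg_finrank_mul_setIntegral_ball_le volume hε
        ((hloc (u x)).integrableOn_isCompact (isCompact_closedBall x ε))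
        (Eventually.of_forall fun y => by positivity)
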